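/- arXiv:1709.08620 — 2 statements merged into one kernel-verified Lean document; each statement's English description precedes it below -/
import Mathlib

section
/- Let h be a hom-Lie color algebra with Z(h) = 0, g a hom-Lie color algebra, and φ̄: g → Der(h)/Inn(h) a homomorphism of color Lie algebras. For any even linear lift φ: g → Der(h) of φ̄ (i.e. π∘φ = φ̄), there exists a unique even graded ε-skew-symmetric bilinear map ρ: g × g → h such that [φ_x, φ_y] - φ_{[x,y]} = ad(ρ(x,y)) for all homogeneous x, y ∈ g. -/
/-- A commutation factor on an abelian group `Γ` with values in the multiplicative group
of nonzero elements of a field `K`. -/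
structure CommutationFactor (K : Type) [Field K] (Γ : Type) [AddCommGroup Γ] where
  ε : Γ → Γ → K
  ne_zero : ∀ a b, ε a b ≠ 0
  add_left : ∀ a b c, ε (a + b) c = ε a c * ε b c
  add_right : ∀ a b c, ε a (b + c) = ε a b * ε a c
  mul_symm : ∀ a b, ε a b * ε b a = 1

/-- A hom-Lie color algebra structure on a `Γ`-graded `K`-vector space `g`:
an internal grading, a graded bilinear bracket, a degree-zero structure map `hom`,
`ε`-skew-symmetry and the `ε`-hom-Jacobi identity (all on homogeneous elements). -/
structure HomLieColorAlgebra (K Γ : Type) [Field K] [AddCommGroup Γ] [DecidableEq Γ]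
    (cf : CommutationFactor K Γ) (g : Type) [AddCommGroup g] [Module K g] where
  grading : Γ → Submodule K g
  internal : DirectSum.IsInternal grading
  bracket : g →ₗ[K] g →ₗ[K] g
  hom : g →ₗ[K] g
  hom_grade : ∀ a : Γ, ∀ x ∈ grading a, hom x ∈ grading a
  bracket_grade : ∀ a b : Γ, ∀ x ∈ grading a, ∀ y ∈ grading b,
    bracket x y ∈ grading (a + b)
  skew : ∀ a b : Γ, ∀ x ∈ grading a, ∀ y ∈ grading b,
    bracket x y = -(cf.ε a b) • bracket y x
  jacobi : ∀ a b c : Γ, ∀ x ∈ grading a, ∀ y ∈ grading b, ∀ z ∈ grading c,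
    cf.ε c a • bracket (hom x) (bracket y z)
      + cf.ε b c • bracket (hom z) (bracket x y)
      + cf.ε a b • bracket (hom y) (bracket z x) = 0

/-!
Because `Z(h) = 0` and the bracket is `ε`-skew-symmetric on homogeneous elements, the map
`ad : c ↦ [·, c]` is injective: each homogeneous component of a `c` with `ad c = 0` is central.
Hence `ρ(x, y)` is forced to be `ad⁻¹` of the commutator defect, and a linear left inverse of `ad`
applied to the defect, glued over the homogeneous components of `g`, gives a bilinear `ρ`.
Its degree, `ε`-skew-symmetry and uniqueness are all read off through the injectivity of `ad`.
-/

namespace DirectSum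

variable {R ι M N P : Type} [CommSemiring R] [DecidableEq ι]
  [AddCommMonoid M] [Module R M] [AddCommMonoid N] [Module R N] [AddCommMonoid P] [Module R P]
  (𝓜 : ι → Submodule R M) (𝓝 : ι → Submodule R N) [Decomposition 𝓜] [Decomposition 𝓝]

noncomputable def gradedLift₂ (F : ι → ι → M →ₗ[R] N →ₗ[R] P) : M →ₗ[R] N →ₗ[R] P :=
  toModule R ι (N →ₗ[R] P) (fun i =>
    ((toModule R ι (𝓜 i →ₗ[R] P) fun j => ((F i j).domRestrict₁₂ (𝓜 i) (𝓝 j)).flip) ∘ₗ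
      (decomposeLinearEquiv 𝓝).toLinearMap).flip) ∘ₗ (decomposeLinearEquiv 𝓜).toLinearMap

theorem gradedLift₂_apply_of_mem (F : ι → ι → M →ₗ[R] N →ₗ[R] P) {i j : ι} {x : M}
    {y : N} (hx : x ∈ 𝓜 i) (hy : y ∈ 𝓝 j) : gradedLift₂ 𝓜 𝓝 F x y = F i j x y := by
  lift x to 𝓜 i using hx
  lift y to 𝓝 j using hy
  simp [gradedLift₂, toModule_lof, LinearMap.domRestrict₁₂_apply]

theorem exists_bilinear_comp_eq_of_mem_range {K E V W : Type} [Field K] [AddCommGroup E]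
    [Module K E] [AddCommGroup V] [Module K V] [AddCommGroup W] [Module K W]
    (𝓥 : ι → Submodule K V) [Decomposition 𝓥] {f : E →ₗ[K] W} (hf : Function.Injective f)
    (D : ι → ι → V →ₗ[K] V →ₗ[K] W)
    (hD : ∀ i j : ι, ∀ x ∈ 𝓥 i, ∀ y ∈ 𝓥 j, D i j x y ∈ LinearMap.range f) :
    ∃ ρ : V →ₗ[K] V →ₗ[K] E, ∀ i j : ι, ∀ x ∈ 𝓥 i, ∀ y ∈ 𝓥 j, f (ρ x y) = D i j x y := by
  refine ⟨gradedLift₂ 𝓥 𝓥 fun i j => (D i j).compr₂ f.leftInverse, fun i j x hx y hy => ?_⟩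
  obtain ⟨c, hc⟩ := hD i j x hx y hy
  rw [gradedLift₂_apply_of_mem _ _ _ hx hy, LinearMap.compr₂_apply, ← hc,
    f.leftInverse_apply_of_inj (LinearMap.ker_eq_bot.mpr hf)]

end DirectSum

open DirectSum

namespace HomLieColorAlgebra

variable {K Γ : Type} [Field K] [AddCommGroup Γ] [DecidableEq Γ] {cf : CommutationFactor K Γ}
  {M : Type} [AddCommGroup M] [Module K M] (L : HomLieColorAlgebra K Γ cf M)

noncomputable instance : Decomposition L.grading := L.internal.chooseDecomposition

theorem linearMap_ext {N : Type} [AddCommGroup N] [Module K N] {f f' : M →ₗ[K] N}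
    (H : ∀ a, ∀ x ∈ L.grading a, f x = f' x) : f = f' :=
  decompose_lhom_ext L.grading fun a => LinearMap.ext fun x => H a x x.2

def ad : M →ₗ[K] Module.End K M := L.bracket.flip

@[simp]
theorem ad_apply (c w : M) : L.ad c w = L.bracket w c := rfl

theorem decompose_bracket {b : Γ} {w : M} (hw : w ∈ L.grading b) (c : M) (d : Γ) :
    (decompose L.grading (L.bracket w c) (b + d) : M) = L.bracket w (decompose L.grading c d) := by
  induction c using Decomposition.inductionOn L.grading with
  | zero => simp
  | @homogeneous e c =>
    have hwc := L.bracket_grade b e w hw c c.2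
    by_cases hed : e = d
    · subst hed
      rw [decompose_of_mem_same _ hwc, decompose_of_mem_same _ c.2]
    · rw [decompose_of_mem_ne _ hwc (by simpa using hed), decompose_of_mem_ne _ c.2 hed, map_zero]
  | add c c' hc hc' => simp [hc, hc']

variable {L}

theorem ad_injective (hZ : ∀ x : M, (∀ y : M, L.bracket x y = 0) → x = 0) :
    Function.Injective L.ad := by
  refine (injective_iff_map_eq_zero L.ad).mpr fun c hc => ?_
  have hcomp : ∀ d, (decompose L.grading c d : M) = 0 := by
    intro d
    refine hZ _ fun y => ?_
    suffices L.bracket (decompose L.grading c d) = 0 by rw [this]; rfl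
    refine L.linearMap_ext fun b y hy => ?_
    rw [L.skew d b _ (decompose L.grading c d).2 y hy, ← L.decompose_bracket hy,
      ← L.ad_apply, hc]
    simp
  apply (decompose L.grading).injective
  ext d
  simp [hcomp d]

theorem mem_grading_of_forall_bracket_mem (hZ : ∀ x : M, (∀ y : M, L.bracket x y = 0) → x = 0)
    {c : M} {d : Γ} (hc : ∀ b : Γ, ∀ w ∈ L.grading b, L.bracket w c ∈ L.grading (b + d)) :
    c ∈ L.grading d := by
  suffices c = decompose L.grading c d from this ▸ (decompose L.grading c d).2
  refine ad_injective hZ (L.linearMap_ext fun b w hw => ?_)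
  rw [ad_apply, ad_apply, ← L.decompose_bracket hw, decompose_of_mem_same _ (hc b w hw)]

end HomLieColorAlgebra

section CommutatorDefect

variable {K Γ g h : Type} [Field K] [AddCommGroup Γ] [DecidableEq Γ] {cf : CommutationFactor K Γ}
  [AddCommGroup g] [Module K g] [AddCommGroup h] [Module K h]

/-- For homogeneous `x, y` and `e = ε(|x|, |y|)` this is `[φ_x, φ_y] - φ_{[x,y]}`. -/
def commutatorDefect (φ : g →ₗ[K] h →ₗ[K] h) (B : g →ₗ[K] g →ₗ[K] g) (e : K) :
    g →ₗ[K] g →ₗ[K] h →ₗ[K] h :=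
  let C := (LinearMap.llcomp K h h h ∘ₗ φ).compl₂ φ
  C - e • C.flip - B.compr₂ φ

@[simp]
theorem commutatorDefect_apply (φ : g →ₗ[K] h →ₗ[K] h) (B : g →ₗ[K] g →ₗ[K] g) (e : K)
    (x y : g) (w : h) :
    commutatorDefect φ B e x y w = φ x (φ y w) - e • φ y (φ x w) - φ (B x y) w :=
  rfl

theorem commutatorDefect_skew (Lg : HomLieColorAlgebra K Γ cf g) (φ : g →ₗ[K] h →ₗ[K] h)
    {a b : Γ} {x y : g} (hx : x ∈ Lg.grading a) (hy : y ∈ Lg.grading b) :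
    commutatorDefect φ Lg.bracket (cf.ε a b) x y
      = -cf.ε a b • commutatorDefect φ Lg.bracket (cf.ε b a) y x := by
  ext w
  simp only [commutatorDefect_apply, LinearMap.smul_apply, Lg.skew a b x hx y hy,
    map_smul, smul_sub, smul_smul, neg_mul, cf.mul_symm a b]
  module

theorem commutatorDefect_mem (Lg : HomLieColorAlgebra K Γ cf g) (Lh : HomLieColorAlgebra K Γ cf h)
    {φ : g →ₗ[K] h →ₗ[K] h}
    (hφ_grade : ∀ a : Γ, ∀ x ∈ Lg.grading a, ∀ c : Γ, ∀ y ∈ Lh.grading c,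
      φ x y ∈ Lh.grading (c + a))
    (e : K) {a b c : Γ} {x y : g} {w : h} (hx : x ∈ Lg.grading a) (hy : y ∈ Lg.grading b)
    (hw : w ∈ Lh.grading c) :
    commutatorDefect φ Lg.bracket e x y w ∈ Lh.grading (c + (a + b)) := by
  have hxy : φ x (φ y w) ∈ Lh.grading (c + (a + b)) := by
    simpa [add_assoc, add_comm b a] using hφ_grade a x hx _ _ (hφ_grade b y hy c w hw)
  have hyx : φ y (φ x w) ∈ Lh.grading (c + (a + b)) := by
    simpa [add_assoc] using hφ_grade b y hy _ _ (hφ_grade a x hx c w hw)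
  exact sub_mem (sub_mem hxy (Submodule.smul_mem _ e hyx))
    (hφ_grade _ _ (Lg.bracket_grade a b x hx y hy) c w hw)

end CommutatorDefect

theorem unique_rho_of_lift_general {K Γ h g : Type} [Field K]
    [AddCommGroup Γ] [DecidableEq Γ] [AddCommGroup h] [Module K h]
    [AddCommGroup g] [Module K g] {cf : CommutationFactor K Γ}
    (Lh : HomLieColorAlgebra K Γ cf h) (Lg : HomLieColorAlgebra K Γ cf g)
    -- h has trivial center
    (hZ : ∀ x : h, (∀ y : h, Lh.bracket x y = 0) → x = 0)
    -- φ is an even linear map into derivations of h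
    (φ : g →ₗ[K] h →ₗ[K] h)
    (hφ_grade : ∀ a : Γ, ∀ x ∈ Lg.grading a, ∀ c : Γ, ∀ y ∈ Lh.grading c,
      φ x y ∈ Lh.grading (c + a))
    -- φ lifts a homomorphism φ̄ : g → Der(h)/Inn(h): the commutator defect is inner
    (hlift : ∀ a b : Γ, ∀ x ∈ Lg.grading a, ∀ y ∈ Lg.grading b,
      ∃ c : h, ∀ w : h,
        φ x (φ y w) - cf.ε a b • φ y (φ x w) - φ (Lg.bracket x y) w = Lh.bracket w c) :
    ∃! ρ : g →ₗ[K] g →ₗ[K] h,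
      (∀ a b : Γ, ∀ x ∈ Lg.grading a, ∀ y ∈ Lg.grading b,
        ρ x y ∈ Lh.grading (a + b)) ∧
      (∀ a b : Γ, ∀ x ∈ Lg.grading a, ∀ y ∈ Lg.grading b,
        ρ x y = -(cf.ε a b) • ρ y x) ∧
      (∀ a b : Γ, ∀ x ∈ Lg.grading a, ∀ y ∈ Lg.grading b, ∀ w : h,
        φ x (φ y w) - cf.ε a b • φ y (φ x w) - φ (Lg.bracket x y) w
          = Lh.bracket w (ρ x y)) := by
  have hinner : ∀ a b : Γ, ∀ x ∈ Lg.grading a, ∀ y ∈ Lg.grading b,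
      commutatorDefect φ Lg.bracket (cf.ε a b) x y ∈ LinearMap.range Lh.ad := by
    intro a b x hx y hy
    obtain ⟨c, hc⟩ := hlift a b x hx y hy
    exact ⟨c, LinearMap.ext fun w => (hc w).symm⟩
  obtain ⟨ρ, hρ⟩ :=
    exists_bilinear_comp_eq_of_mem_range Lg.grading (Lh.ad_injective hZ) _ hinner
  have hρ_apply : ∀ a b : Γ, ∀ x ∈ Lg.grading a, ∀ y ∈ Lg.grading b, ∀ w : h,
      φ x (φ y w) - cf.ε a b • φ y (φ x w) - φ (Lg.bracket x y) w = Lh.bracket w (ρ x y) :=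
    fun a b x hx y hy w => (LinearMap.congr_fun (hρ a b x hx y hy) w).symm
  refine ⟨ρ, ⟨fun a b x hx y hy => ?_, fun a b x hx y hy => ?_, hρ_apply⟩, fun ρ' hρ' => ?_⟩
  · refine Lh.mem_grading_of_forall_bracket_mem hZ fun c w hw => ?_
    rw [← hρ_apply a b x hx y hy w]
    exact commutatorDefect_mem Lg Lh hφ_grade _ hx hy hw
  · apply Lh.ad_injective hZ
    rw [map_smul, hρ a b x hx y hy, hρ b a y hy x hx, commutatorDefect_skew Lg φ hx hy]
  · refine Lg.linearMap_ext fun a x hx => Lg.linearMap_ext fun b y hy => Lh.ad_injective hZ ?_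
    ext w
    rw [hρ a b x hx y hy, Lh.ad_apply, ← hρ'.2.2 a b x hx y hy w]
    rfl

/-- If `Z(h) = 0` and `φ : g → Der(h)` is an even linear lift of a homomorphism
`φ̄ : g → Der(h)/Inn(h)` (so the commutator defect of `φ` is always inner), there is a
unique even graded ε-skew-symmetric bilinear `ρ : g × g → h` with
`[φ_x, φ_y] - φ_{[x,y]} = ad(ρ(x,y))`. -/
theorem unique_rho_of_lift {K Γ h g : Type} [Field K] [CharZero K]
    [AddCommGroup Γ] [DecidableEq Γ] [AddCommGroup h] [Module K h]
    [AddCommGroup g] [Module K g] {cf : CommutationFactor K Γ}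
    (Lh : HomLieColorAlgebra K Γ cf h) (Lg : HomLieColorAlgebra K Γ cf g)
    -- h has trivial center
    (hZ : ∀ x : h, (∀ y : h, Lh.bracket x y = 0) → x = 0)
    -- φ is an even linear map into derivations of h
    (φ : g →ₗ[K] h →ₗ[K] h)
    (hφ_grade : ∀ a : Γ, ∀ x ∈ Lg.grading a, ∀ c : Γ, ∀ y ∈ Lh.grading c,
      φ x y ∈ Lh.grading (c + a))
    (hφ_hom : ∀ x : g, ∀ y : h, φ x (Lh.hom y) = Lh.hom (φ x y))
    (hφ_der : ∀ a : Γ, ∀ x ∈ Lg.grading a, ∀ b c : Γ, ∀ y ∈ Lh.grading b, ∀ z ∈ Lh.grading c,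
      φ x (Lh.bracket y z) = Lh.bracket (φ x y) z + cf.ε a b • Lh.bracket y (φ x z))
    -- φ lifts a homomorphism φ̄ : g → Der(h)/Inn(h): the commutator defect is inner
    (hlift : ∀ a b : Γ, ∀ x ∈ Lg.grading a, ∀ y ∈ Lg.grading b,
      ∃ c : h, ∀ w : h,
        φ x (φ y w) - cf.ε a b • φ y (φ x w) - φ (Lg.bracket x y) w = Lh.bracket w c) :
    ∃! ρ : g →ₗ[K] g →ₗ[K] h,
      (∀ a b : Γ, ∀ x ∈ Lg.grading a, ∀ y ∈ Lg.grading b,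
        ρ x y ∈ Lh.grading (a + b)) ∧
      (∀ a b : Γ, ∀ x ∈ Lg.grading a, ∀ y ∈ Lg.grading b,
        ρ x y = -(cf.ε a b) • ρ y x) ∧
      (∀ a b : Γ, ∀ x ∈ Lg.grading a, ∀ y ∈ Lg.grading b, ∀ w : h,
        φ x (φ y w) - cf.ε a b • φ y (φ x w) - φ (Lg.bracket x y) w
          = Lh.bracket w (ρ x y)) :=
  unique_rho_of_lift_general Lh Lg hZ φ hφ_grade hlift
end

section
/- Let (g, [·,·], ε, α) be a regular multiplicative hom-Lie color algebra (α an automorphism). Then (g, [·,·]', ε) with [x,y]' := α^{-1}([x,y]) is a color Lie algebra, i.e. it satisfies the ε-Jacobi identity Σ_{cyclic{x,y,z}} ε(z̄,x̄)[x,[y,z]']' = 0. -/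
/-! Since `α` is bijective, `α⁻¹` is again multiplicative, and it preserves degrees because an
injective degree-preserving map commutes with the projections onto the homogeneous components.
The ε-hom-Jacobi identity for `α⁻²x, α⁻²y, α⁻²z` then reads, after pushing `α⁻¹` through the
brackets, as the ε-Jacobi identity for `[·,·]'`. -/

theorem Function.LeftInverse.map_op₂ {α : Type*} {f g : α → α} (op : α → α → α)
    (hgf : Function.LeftInverse g f) (hfg : Function.LeftInverse f g)
    (hop : ∀ x y, f (op x y) = op (f x) (f y)) (x y : α) :
    g (op x y) = op (g x) (g y) :=
  hgf.injective <| by rw [hfg, hop, hfg, hfg]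

namespace DirectSum

variable {ι R M : Type*} [DecidableEq ι] [Semiring R] [AddCommMonoid M] [Module R M]
  (ℳ : ι → Submodule R M) [Decomposition ℳ] {f : M →ₗ[R] M}

theorem coe_decompose_map_of_mapsTo (hf : ∀ i, ∀ x ∈ ℳ i, f x ∈ ℳ i) (x : M) (i : ι) :
    (decompose ℳ (f x) i : M) = f (decompose ℳ x i) := by
  induction x using Decomposition.inductionOn ℳ with
  | zero => simp
  | @homogeneous j m =>
    rw [decompose_coe, decompose_of_mem ℳ (hf j m m.2), coe_of_apply, coe_of_apply]
    split_ifs <;> simp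
  | add x y hx hy => simp only [map_add, decompose_add, add_apply, Submodule.coe_add, hx, hy]

theorem mem_of_map_mem (hf : ∀ i, ∀ x ∈ ℳ i, f x ∈ ℳ i) (hinj : Function.Injective f)
    {x : M} {i : ι} (hx : f x ∈ ℳ i) : x ∈ ℳ i := by
  have : f (decompose ℳ x i) = f x := by
    rw [← coe_decompose_map_of_mapsTo ℳ hf, decompose_of_mem_same ℳ hx]
  exact hinj this ▸ (decompose ℳ x i).2

end DirectSum

theorem HomLieColorAlgebra.mem_grading_of_hom_mem {K Γ g : Type} [Field K] [AddCommGroup Γ]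
    [DecidableEq Γ] [AddCommGroup g] [Module K g] {cf : CommutationFactor K Γ}
    (L : HomLieColorAlgebra K Γ cf g) (hinj : Function.Injective L.hom) {a : Γ} {x : g}
    (hx : L.hom x ∈ L.grading a) : x ∈ L.grading a :=
  letI := L.internal.chooseDecomposition
  DirectSum.mem_of_map_mem L.grading L.hom_grade hinj hx

theorem inverse_yau_twist_general {K Γ g : Type} [Field K]
    [AddCommGroup Γ] [DecidableEq Γ] [AddCommGroup g] [Module K g]
    {cf : CommutationFactor K Γ} (L : HomLieColorAlgebra K Γ cf g)
    (hmul : ∀ x y : g, L.hom (L.bracket x y) = L.bracket (L.hom x) (L.hom y))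
    -- regularity: α is an automorphism, with inverse αinv
    (αinv : g →ₗ[K] g)
    (hinv₁ : ∀ x : g, αinv (L.hom x) = x) (hinv₂ : ∀ x : g, L.hom (αinv x) = x) :
    -- the ε-Jacobi identity for [x,y]' := α⁻¹([x,y])
    ∀ a b c : Γ, ∀ x ∈ L.grading a, ∀ y ∈ L.grading b, ∀ z ∈ L.grading c,
      cf.ε c a • αinv (L.bracket x (αinv (L.bracket y z)))
        + cf.ε b c • αinv (L.bracket z (αinv (L.bracket x y)))
        + cf.ε a b • αinv (L.bracket y (αinv (L.bracket z x))) = 0 := by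
  intro a b c x hx y hy z hz
  have hinj : Function.Injective L.hom := Function.LeftInverse.injective hinv₁
  have hbr : ∀ u v, αinv (L.bracket u v) = L.bracket (αinv u) (αinv v) :=
    Function.LeftInverse.map_op₂ (fun u v ↦ L.bracket u v) hinv₁ hinv₂ hmul
  have hgrade : ∀ {d : Γ} {v : g}, v ∈ L.grading d → αinv v ∈ L.grading d :=
    fun hv ↦ L.mem_grading_of_hom_mem hinj (by rwa [hinv₂])
  have hJ := L.jacobi a b c _ (hgrade (hgrade hx)) _ (hgrade (hgrade hy)) _ (hgrade (hgrade hz))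
  simp only [hinv₂] at hJ
  simpa only [hbr] using hJ

/-- Inverse Yau twist: for a regular multiplicative hom-Lie color algebra `(g,[·,·],ε,α)`,
the bracket `[x,y]' = α⁻¹([x,y])` satisfies the untwisted ε-Jacobi identity, so
`(g, [·,·]', ε)` is a color Lie algebra. -/
theorem inverse_yau_twist {K Γ g : Type} [Field K] [CharZero K]
    [AddCommGroup Γ] [DecidableEq Γ] [AddCommGroup g] [Module K g]
    {cf : CommutationFactor K Γ} (L : HomLieColorAlgebra K Γ cf g)
    (hmul : ∀ x y : g, L.hom (L.bracket x y) = L.bracket (L.hom x) (L.hom y))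
    -- regularity: α is an automorphism, with inverse αinv
    (αinv : g →ₗ[K] g)
    (hinv₁ : ∀ x : g, αinv (L.hom x) = x) (hinv₂ : ∀ x : g, L.hom (αinv x) = x) :
    -- the ε-Jacobi identity for [x,y]' := α⁻¹([x,y])
    ∀ a b c : Γ, ∀ x ∈ L.grading a, ∀ y ∈ L.grading b, ∀ z ∈ L.grading c,
      cf.ε c a • αinv (L.bracket x (αinv (L.bracket y z)))
        + cf.ε b c • αinv (L.bracket z (αinv (L.bracket x y)))
        + cf.ε a b • αinv (L.bracket y (αinv (L.bracket z x))) = 0 :=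
  inverse_yau_twist_general L hmul αinv hinv₁ hinv₂
end
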